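/- arXiv:1002.0831 — 2 statements merged into one kernel-verified Lean document; each statement's English description precedes it below -/
import Mathlib

section
/- Let λ be a partition, γ an addable i-node and γ′ a removable i-node of λ with γ ≠ γ′. Then |I_i^{(r)}(λ, λ+γ)| − |I_i^{(r)}(λ−γ′, λ−γ′+γ)| = |R_i^{(l)}(λ−γ′, λ)| − |R_i^{(l)}(λ+γ−γ′, λ+γ)|. -/
/-- A partition given as a weakly decreasing sequence of row lengths, eventually zero. -/
def IsPartition (f : ℕ → ℕ) : Prop := Antitone f ∧ ∃ N, ∀ m, N ≤ m → f m = 0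

/-- The node `p = (a, b)` (row `a`, column `b`, both 0-indexed) is addable (indent) for `f`. -/
def Addable (f : ℕ → ℕ) (p : ℕ × ℕ) : Prop :=
  p.2 = f p.1 ∧ (p.1 = 0 ∨ p.2 < f (p.1 - 1))

/-- The node `p = (a, b)` is removable for `f`. -/
def Removable (f : ℕ → ℕ) (p : ℕ × ℕ) : Prop :=
  p.2 + 1 = f p.1 ∧ f (p.1 + 1) ≤ p.2

/-- The residue of the node `p = (a, b)` is `b - a (mod n)`. -/
def Res (n : ℕ) (p : ℕ × ℕ) : ZMod n := (p.2 : ZMod n) - (p.1 : ZMod n)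

/-- Add a node in row `p.1`. -/
def addNode (f : ℕ → ℕ) (p : ℕ × ℕ) : ℕ → ℕ := Function.update f p.1 (f p.1 + 1)

/-- Remove a node in row `p.1`. -/
def removeNode (f : ℕ → ℕ) (p : ℕ × ℕ) : ℕ → ℕ := Function.update f p.1 (f p.1 - 1)

/-- `I_i(f)`: the set of addable `i`-nodes of `f`. -/
def AddSet (n : ℕ) (f : ℕ → ℕ) (i : ZMod n) : Set (ℕ × ℕ) :=
  {p | Addable f p ∧ Res n p = i}

/-- `R_i(f)`: the set of removable `i`-nodes of `f`. -/
def RemSet (n : ℕ) (f : ℕ → ℕ) (i : ZMod n) : Set (ℕ × ℕ) :=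
  {p | Removable f p ∧ Res n p = i}

/-- Addable `i`-nodes strictly to the left of column `c`. -/
def AddSetL (n : ℕ) (f : ℕ → ℕ) (i : ZMod n) (c : ℕ) : Set (ℕ × ℕ) :=
  {p | p ∈ AddSet n f i ∧ p.2 < c}

/-- Addable `i`-nodes not to the left of column `c`. -/
def AddSetR (n : ℕ) (f : ℕ → ℕ) (i : ZMod n) (c : ℕ) : Set (ℕ × ℕ) :=
  {p | p ∈ AddSet n f i ∧ c ≤ p.2}

/-- Removable `i`-nodes strictly to the left of column `c`. -/
def RemSetL (n : ℕ) (f : ℕ → ℕ) (i : ZMod n) (c : ℕ) : Set (ℕ × ℕ) :=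
  {p | p ∈ RemSet n f i ∧ p.2 < c}

/-- Removable `i`-nodes not to the left of column `c`. -/
def RemSetR (n : ℕ) (f : ℕ → ℕ) (i : ZMod n) (c : ℕ) : Set (ℕ × ℕ) :=
  {p | p ∈ RemSet n f i ∧ c ≤ p.2}

section Helpers

variable {n : ℕ}

lemma one_ne_zero_zmod (hn : 2 ≤ n) : (1 : ZMod n) ≠ 0 := by
  haveI : Fact (1 < n) := ⟨hn⟩
  exact one_ne_zero

lemma addSet_finite (f : ℕ → ℕ) (hf : ∃ N, ∀ m, N ≤ m → f m = 0) (i : ZMod n) :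
    (AddSet n f i).Finite := by
  obtain ⟨N, hN⟩ := hf
  refine Set.Finite.subset ((Set.finite_Iic N).image (fun a => (a, f a))) ?_
  rintro ⟨a, b⟩ ⟨⟨hb, hcond⟩, -⟩
  dsimp only at hb hcond
  have ha : a ≤ N := by
    by_contra h
    push_neg at h
    have h0 : f a = 0 := hN _ (by omega)
    have h1 : f (a - 1) = 0 := hN _ (by omega)
    rcases hcond with h2 | h2 <;> omega
  exact ⟨a, ha, by simp [hb]⟩

lemma remSet_finite (f : ℕ → ℕ) (hf : ∃ N, ∀ m, N ≤ m → f m = 0) (i : ZMod n) :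
    (RemSet n f i).Finite := by
  obtain ⟨N, hN⟩ := hf
  refine Set.Finite.subset ((Set.finite_Iic N).image (fun a => (a, f a - 1))) ?_
  rintro ⟨a, b⟩ ⟨⟨hb, hcond⟩, -⟩
  dsimp only at hb hcond
  have ha : a ≤ N := by
    by_contra h
    push_neg at h
    have h0 : f a = 0 := hN _ (by omega)
    omega
  exact ⟨a, ha, by simp; omega⟩

lemma addSet_removeNode (hn : 2 ≤ n) (lam : ℕ → ℕ) (hmono : Antitone lam)
    (i : ZMod n) (γ' : ℕ × ℕ) (h1 : γ'.2 + 1 = lam γ'.1) (h2 : lam (γ'.1 + 1) ≤ γ'.2)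
    (hres : Res n γ' = i) :
    AddSet n (removeNode lam γ') i = insert γ' (AddSet n lam i) := by
  have h1ne0 := one_ne_zero_zmod (n := n) hn
  have hμ : ∀ m, removeNode lam γ' m = if m = γ'.1 then γ'.2 else lam m := by
    intro m
    simp only [removeNode, Function.update_apply]
    split_ifs with h
    · omega
    · rfl
  ext ⟨a, b⟩
  simp only [AddSet, Addable, Res, Set.mem_setOf_eq, Set.mem_insert_iff, hμ]
  constructor
  · rintro ⟨⟨hb, hcond⟩, hr⟩
    by_cases ha : a = γ'.1
    · left
      rw [if_pos ha] at hb
      rw [ha, hb]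
    · right
      rw [if_neg ha] at hb
      refine ⟨⟨hb, ?_⟩, hr⟩
      by_cases h0 : a = 0
      · exact Or.inl h0
      · right
        rcases hcond with h0' | hlt
        · omega
        · by_cases ha1 : a - 1 = γ'.1
          · rw [if_pos ha1] at hlt
            rw [ha1]
            omega
          · rwa [if_neg ha1] at hlt
  · rintro (hp | ⟨⟨hb, hcond⟩, hr⟩)
    · have ha : a = γ'.1 := congrArg Prod.fst hp
      have hb : b = γ'.2 := congrArg Prod.snd hp
      subst ha
      subst hb
      refine ⟨⟨by rw [if_pos rfl], ?_⟩, hres⟩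
      by_cases h0 : γ'.1 = 0
      · exact Or.inl h0
      · right
        rw [if_neg (by omega)]
        have := hmono (Nat.sub_le γ'.1 1)
        omega
    · refine ⟨⟨?_, ?_⟩, hr⟩
      · by_cases ha : a = γ'.1
        · exfalso
          rw [ha] at hb
          have hbv : b = γ'.2 + 1 := by omega
          apply h1ne0
          have e1 : ((b : ℕ) : ZMod n) - (a : ZMod n) = ((γ'.2 : ℕ) : ZMod n) - (γ'.1 : ZMod n) := by
            rw [hr]; exact hres.symm
          rw [hbv, ha] at e1
          push_cast at e1
          linear_combination e1
        · rw [if_neg ha]; exact hb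
      · by_cases h0 : a = 0
        · exact Or.inl h0
        right
        have hlt : b < lam (a - 1) := hcond.resolve_left h0
        by_cases ha1 : a - 1 = γ'.1
        · rw [if_pos ha1]
          have haa : a = γ'.1 + 1 := by omega
          have hble : b ≤ γ'.2 := by rw [haa] at hb; omega
          rcases lt_or_eq_of_le hble with h' | h'
          · exact h'
          · exfalso
            apply h1ne0
            have e1 : ((b : ℕ) : ZMod n) - (a : ZMod n) = ((γ'.2 : ℕ) : ZMod n) - (γ'.1 : ZMod n) := by
              rw [hr]; exact hres.symm
            rw [h', haa] at e1
            push_cast at e1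
            linear_combination -e1
        · rw [if_neg ha1]; exact hlt

lemma remSet_addNode (hn : 2 ≤ n) (g : ℕ → ℕ) (hmono : Antitone g)
    (i : ZMod n) (γ : ℕ × ℕ) (hb : γ.2 = g γ.1) (hres : Res n γ = i) :
    RemSet n (addNode g γ) i = insert γ (RemSet n g i) := by
  have h1ne0 := one_ne_zero_zmod (n := n) hn
  have hν : ∀ m, addNode g γ m = if m = γ.1 then γ.2 + 1 else g m := by
    intro m
    simp only [addNode, Function.update_apply]
    split_ifs with h
    · omega
    · rfl
  ext ⟨x, y⟩
  simp only [RemSet, Removable, Res, Set.mem_setOf_eq, Set.mem_insert_iff, hν]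
  constructor
  · rintro ⟨⟨h1, h2⟩, hr⟩
    by_cases hx : x = γ.1
    · left
      rw [if_pos hx] at h1
      have hy : y = γ.2 := by omega
      rw [hx, hy]
    · right
      rw [if_neg hx] at h1
      refine ⟨⟨h1, ?_⟩, hr⟩
      by_cases hx1 : x + 1 = γ.1
      · rw [if_pos hx1] at h2
        rw [hx1]
        omega
      · rwa [if_neg hx1] at h2
  · rintro (hp | ⟨⟨h1, h2⟩, hr⟩)
    · have hx : x = γ.1 := congrArg Prod.fst hp
      have hy : y = γ.2 := congrArg Prod.snd hp
      subst hx
      subst hy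
      refine ⟨⟨by rw [if_pos rfl], ?_⟩, hres⟩
      rw [if_neg (by omega)]
      have := hmono (show γ.1 ≤ γ.1 + 1 by omega)
      omega
    · refine ⟨⟨?_, ?_⟩, hr⟩
      · by_cases hx : x = γ.1
        · exfalso
          rw [hx, ← hb] at h1
          apply h1ne0
          have e1 : ((y : ℕ) : ZMod n) - (x : ZMod n) = ((γ.2 : ℕ) : ZMod n) - (γ.1 : ZMod n) := by
            rw [hr]; exact hres.symm
          rw [hx, ← h1] at e1
          push_cast at e1
          linear_combination -e1
        · rw [if_neg hx]; exact h1
      · by_cases hx1 : x + 1 = γ.1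
        · rw [if_pos hx1]
          have h2' : γ.2 ≤ y := by
            rw [hx1, ← hb] at h2
            exact h2
          rcases lt_or_eq_of_le h2' with h' | h'
          · omega
          · exfalso
            apply h1ne0
            have e1 : ((y : ℕ) : ZMod n) - (x : ZMod n) = ((γ.2 : ℕ) : ZMod n) - (γ.1 : ZMod n) := by
              rw [hr]; exact hres.symm
            rw [← h', ← hx1] at e1
            push_cast at e1
            linear_combination e1
        · rw [if_neg hx1]; exact h2

end Helpers

/-- Claim A, first identity:
`|I_i⁽ʳ⁾(λ, λ+γ)| - |I_i⁽ʳ⁾(λ-γ', λ-γ'+γ)| = |R_i⁽ˡ⁾(λ-γ', λ)| - |R_i⁽ˡ⁾(λ+γ-γ', λ+γ)|`. -/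
theorem claimA_first (n : ℕ) (hn : 2 ≤ n) (lam : ℕ → ℕ) (hlam : IsPartition lam)
    (i : ZMod n) (γ γ' : ℕ × ℕ) (hγ : Addable lam γ) (hγres : Res n γ = i)
    (hγ' : Removable lam γ') (hγ'res : Res n γ' = i) (hne : γ ≠ γ') :
    ((AddSetR n lam i γ.2).ncard : ℤ) -
      ((AddSetR n (removeNode lam γ') i γ.2).ncard : ℤ) =
    ((RemSetL n (removeNode lam γ') i γ'.2).ncard : ℤ) -
      ((RemSetL n (addNode (removeNode lam γ') γ) i γ'.2).ncard : ℤ) := by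
  obtain ⟨hmono, hvanish⟩ := hlam
  have h1ne0 := one_ne_zero_zmod (n := n) hn
  obtain ⟨hg1, hg2⟩ := hγ'
  obtain ⟨ha1, ha2⟩ := hγ
  set μ := removeNode lam γ' with hμdef
  have hμ : ∀ m, μ m = if m = γ'.1 then γ'.2 else lam m := by
    intro m
    simp only [hμdef, removeNode, Function.update_apply]
    split_ifs with h
    · omega
    · rfl
  -- rows of γ and γ' differ
  have hrowne : γ.1 ≠ γ'.1 := by
    intro h
    rw [h] at ha1
    have hbv : γ.2 = γ'.2 + 1 := by omega
    apply h1ne0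
    have e1 : Res n γ = Res n γ' := by rw [hγres, hγ'res]
    simp only [Res] at e1
    rw [hbv, h] at e1
    push_cast at e1
    linear_combination e1
  have hμmono : Antitone μ := by
    intro x y hxy
    rw [hμ, hμ]
    by_cases hy : y = γ'.1 <;> by_cases hx : x = γ'.1
    · rw [if_pos hy, if_pos hx]
    · rw [if_pos hy, if_neg hx]
      have := hmono (show x ≤ γ'.1 by omega)
      omega
    · rw [if_neg hy, if_pos hx]
      have := hmono (show γ'.1 + 1 ≤ y by omega)
      omega
    · rw [if_neg hy, if_neg hx]
      exact hmono hxy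
  have hμvanish : ∃ N, ∀ m, N ≤ m → μ m = 0 := by
    obtain ⟨N, hN⟩ := hvanish
    refine ⟨N, fun m hm => ?_⟩
    rw [hμ]
    split_ifs with h
    · have := hN m hm
      rw [h] at this
      omega
    · exact hN m hm
  -- γ is addable for μ
  have hγμb : γ.2 = μ γ.1 := by
    rw [hμ, if_neg hrowne]
    exact ha1
  have hγμ : Addable μ γ := by
    refine ⟨hγμb, ?_⟩
    by_cases h0 : γ.1 = 0
    · exact Or.inl h0
    · right
      have hlt : γ.2 < lam (γ.1 - 1) := ha2.resolve_left h0
      rw [hμ]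
      split_ifs with h
      · have h11 : γ.1 = γ'.1 + 1 := by omega
        have hle : γ.2 ≤ γ'.2 := by
          rw [h11] at ha1
          omega
        rcases lt_or_eq_of_le hle with h' | h'
        · exact h'
        · exfalso
          apply h1ne0
          have e1 : Res n γ = Res n γ' := by rw [hγres, hγ'res]
          simp only [Res] at e1
          rw [h', h11] at e1
          push_cast at e1
          linear_combination -e1
      · exact hlt
  -- columns of γ and γ' differ
  have hcolne : γ.2 ≠ γ'.2 := by
    intro hbb
    have hrowlt : γ'.1 < γ.1 := by
      rcases lt_or_ge γ'.1 γ.1 with h | h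
      · exact h
      · exfalso
        have := hmono h
        omega
    have e1 : Res n γ = Res n γ' := by rw [hγres, hγ'res]
    simp only [Res] at e1
    rw [hbb] at e1
    have e2 : ((γ.1 : ℕ) : ZMod n) = ((γ'.1 : ℕ) : ZMod n) := by linear_combination -e1
    have e3 : γ'.1 ≡ γ.1 [MOD n] := (ZMod.natCast_eq_natCast_iff _ _ _).mp e2.symm
    have e4 : n ∣ γ.1 - γ'.1 := (Nat.modEq_iff_dvd' (le_of_lt hrowlt)).mp e3
    have e5 : n ≤ γ.1 - γ'.1 := Nat.le_of_dvd (by omega) e4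
    have hA := ha2.resolve_left (by omega)
    have hB := hmono (show γ'.1 + 1 ≤ γ.1 - 1 by omega)
    omega
  have hAdd : AddSet n μ i = insert γ' (AddSet n lam i) :=
    addSet_removeNode hn lam hmono i γ' hg1 hg2 hγ'res
  have hRem : RemSet n (addNode μ γ) i = insert γ (RemSet n μ i) :=
    remSet_addNode hn μ hμmono i γ hγμb hγres
  have hγ'notA : γ' ∉ AddSet n lam i := by
    rintro ⟨⟨h, -⟩, -⟩
    omega
  have hγnotR : γ ∉ RemSet n μ i := by
    rintro ⟨⟨h, -⟩, -⟩
    rw [← hγμb] at h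
    omega
  have hfin1 : (AddSetR n lam i γ.2).Finite :=
    (addSet_finite lam hvanish i).subset (fun p hp => hp.1)
  have hfin3 : (RemSetL n μ i γ'.2).Finite :=
    (remSet_finite μ hμvanish i).subset (fun p hp => hp.1)
  rcases lt_or_gt_of_ne hcolne with hlt | hgt
  · -- γ.2 < γ'.2
    have e2 : AddSetR n μ i γ.2 = insert γ' (AddSetR n lam i γ.2) := by
      ext p
      simp only [AddSetR, Set.mem_setOf_eq, hAdd, Set.mem_insert_iff]
      constructor
      · rintro ⟨h | h, hc⟩
        · exact Or.inl h
        · exact Or.inr ⟨h, hc⟩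
      · rintro (h | ⟨h, hc⟩)
        · subst h
          exact ⟨Or.inl rfl, le_of_lt hlt⟩
        · exact ⟨Or.inr h, hc⟩
    have e4 : RemSetL n (addNode μ γ) i γ'.2 = insert γ (RemSetL n μ i γ'.2) := by
      ext p
      simp only [RemSetL, Set.mem_setOf_eq, hRem, Set.mem_insert_iff]
      constructor
      · rintro ⟨h | h, hc⟩
        · exact Or.inl h
        · exact Or.inr ⟨h, hc⟩
      · rintro (h | ⟨h, hc⟩)
        · subst h
          exact ⟨Or.inl rfl, hlt⟩
        · exact ⟨Or.inr h, hc⟩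
    have hn1 : γ' ∉ AddSetR n lam i γ.2 := fun h => hγ'notA h.1
    have hn3 : γ ∉ RemSetL n μ i γ'.2 := fun h => hγnotR h.1
    rw [e2, e4, Set.ncard_insert_of_notMem hn1 hfin1, Set.ncard_insert_of_notMem hn3 hfin3]
    push_cast
    ring
  · -- γ'.2 < γ.2
    have e2 : AddSetR n μ i γ.2 = AddSetR n lam i γ.2 := by
      ext p
      simp only [AddSetR, Set.mem_setOf_eq, hAdd, Set.mem_insert_iff]
      constructor
      · rintro ⟨h | h, hc⟩
        · subst h
          exfalso
          omega
        · exact ⟨h, hc⟩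
      · rintro ⟨h, hc⟩
        exact ⟨Or.inr h, hc⟩
    have e4 : RemSetL n (addNode μ γ) i γ'.2 = RemSetL n μ i γ'.2 := by
      ext p
      simp only [RemSetL, Set.mem_setOf_eq, hRem, Set.mem_insert_iff]
      constructor
      · rintro ⟨h | h, hc⟩
        · subst h
          exfalso
          omega
        · exact ⟨h, hc⟩
      · rintro ⟨h, hc⟩
        exact ⟨Or.inr h, hc⟩
    rw [e2, e4]
    ring
end

section
/- The set of addable (i+1)-nodes of λ+γ₁+γ₂, where γ₁, γ₂ are addable i-nodes of λ, decomposes as the disjoint union I_{i+1}(λ+γ₁+γ₂) = I_{i+1}(λ) ∪ (I_{i+1}(λ+γ₁) − I_{i+1}(λ)) ∪ (I_{i+1}(λ+γ₂) − I_{i+1}(λ)), i.e., I_{i+1}(λ+γ₁+γ₂) = I_{i+1}(λ) ∪ I_{i+1}(λ+γ₁) ∪ I_{i+1}(λ+γ₂) as sets. -/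
/-!
Adding a node `γ = (a, λ_a)` of residue `i` destroys no addable node other than `γ` itself, and
creates addable nodes only in row `a` and directly below `γ`, at `(a + 1, λ_a)` of residue
`i - 1`. For `n ≥ 3` the residue `i + 1` differs from `i` and `i - 1`, so the addable
`(i+1)`-nodes of `λ` and of `λ + γ₁`, `λ + γ₂` survive in `λ + γ₁ + γ₂`, and an addable
`(i+1)`-node of `λ + γ₁ + γ₂` is one of `λ + γ₂` if it lies in the row of `γ₂`, and of `λ + γ₁`
otherwise.
-/

section AddNode

variable {f : ℕ → ℕ} {γ p : ℕ × ℕ}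

theorem addNode_apply_of_ne {c : ℕ} (hc : c ≠ γ.1) : addNode f γ c = f c :=
  Function.update_of_ne hc _ _

theorem addNode_apply_self : addNode f γ γ.1 = f γ.1 + 1 :=
  Function.update_self _ _ _

theorem le_addNode (c : ℕ) : f c ≤ addNode f γ c := by
  rcases eq_or_ne c γ.1 with rfl | hc
  · rw [addNode_apply_self]; exact Nat.le_succ _
  · rw [addNode_apply_of_ne hc]

theorem addNode_comm {γ₁ γ₂ : ℕ × ℕ} (hrow : γ₁.1 ≠ γ₂.1) :
    addNode (addNode f γ₁) γ₂ = addNode (addNode f γ₂) γ₁ := by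
  unfold addNode
  rw [Function.update_of_ne hrow.symm, Function.update_of_ne hrow, Function.update_comm hrow.symm]

theorem addable_addNode_of_addable (hp : Addable f p) (hγ : γ.2 = f γ.1) (hne : p ≠ γ) :
    Addable (addNode f γ) p := by
  have hrow : p.1 ≠ γ.1 := fun h => hne (Prod.ext h (by rw [hp.1, hγ, h]))
  exact ⟨by rw [addNode_apply_of_ne hrow, hp.1], hp.2.imp_right (·.trans_le (le_addNode _))⟩

theorem addable_of_addable_addNode (hp : Addable (addNode f γ) p) (hrow : p.1 ≠ γ.1)
    (hbelow : p ≠ (γ.1 + 1, f γ.1)) : Addable f p := by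
  refine ⟨by rw [hp.1, addNode_apply_of_ne hrow], hp.2.imp_right fun h => ?_⟩
  rcases eq_or_ne (p.1 - 1) γ.1 with hprev | hprev
  · have hp1 : p.1 = γ.1 + 1 := by omega
    rw [hprev] at h ⊢
    rw [addNode_apply_self] at h
    exact lt_of_le_of_ne (Nat.le_of_lt_succ h) fun hcol => hbelow (Prod.ext hp1 hcol)
  · rwa [addNode_apply_of_ne hprev] at h

variable {n : ℕ} {i j : ZMod n}

theorem addSet_subset_addSet_addNode (hγ : γ.2 = f γ.1) (hres : Res n γ = i) (hj : j ≠ i) :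
    AddSet n f j ⊆ AddSet n (addNode f γ) j := by
  rintro p ⟨hp, hpres⟩
  refine ⟨addable_addNode_of_addable hp hγ ?_, hpres⟩
  rintro rfl
  exact hj (hpres.symm.trans hres)

theorem mem_addSet_of_mem_addSet_addNode (hγ : γ.2 = f γ.1) (hres : Res n γ = i)
    (hj : j ≠ i - 1) (hp : p ∈ AddSet n (addNode f γ) j) (hrow : p.1 ≠ γ.1) :
    p ∈ AddSet n f j := by
  refine ⟨addable_of_addable_addNode hp.1 hrow ?_, hp.2⟩
  rintro rfl
  apply hj
  rw [← hp.2, ← hres, Res, Res, hγ]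
  push_cast
  ring

end AddNode

theorem natCast_zmod_ne_zero {n k : ℕ} (hk : 0 < k) (hkn : k < n) : (k : ZMod n) ≠ 0 := by
  rw [Ne, ZMod.natCast_eq_zero_iff]
  exact Nat.not_dvd_of_pos_of_lt hk hkn

theorem addSet_succ_union_general (n : ℕ) (hn : 3 ≤ n) (lam : ℕ → ℕ)
    (i : ZMod n) (γ₁ γ₂ : ℕ × ℕ)
    (hγ₁ : Addable lam γ₁) (hγ₁res : Res n γ₁ = i)
    (hγ₂ : Addable lam γ₂) (hγ₂res : Res n γ₂ = i) (hne : γ₁ ≠ γ₂) :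
    AddSet n (addNode (addNode lam γ₁) γ₂) (i + 1) =
      AddSet n lam (i + 1) ∪ AddSet n (addNode lam γ₁) (i + 1) ∪
        AddSet n (addNode lam γ₂) (i + 1) := by
  have hrow : γ₁.1 ≠ γ₂.1 := fun h => hne (Prod.ext h (by rw [hγ₁.1, hγ₂.1, h]))
  have hsucc : i + 1 ≠ i := fun h =>
    natCast_zmod_ne_zero (n := n) (k := 1) one_pos (by omega) (by push_cast; linear_combination h)
  have hsucc_pred : i + 1 ≠ i - 1 := fun h =>
    natCast_zmod_ne_zero (n := n) (k := 2) two_pos (by omega) (by push_cast; linear_combination h)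
  have hγ₁' : γ₁.2 = addNode lam γ₂ γ₁.1 := by rw [addNode_apply_of_ne hrow, hγ₁.1]
  have hγ₂' : γ₂.2 = addNode lam γ₁ γ₂.1 := by rw [addNode_apply_of_ne hrow.symm, hγ₂.1]
  apply Set.Subset.antisymm
  · intro p hp
    by_cases hp₂ : p.1 = γ₂.1
    · rw [addNode_comm hrow] at hp
      exact Or.inr (mem_addSet_of_mem_addSet_addNode hγ₁' hγ₁res hsucc_pred hp (hp₂ ▸ hrow.symm))
    · exact Or.inl (Or.inr (mem_addSet_of_mem_addSet_addNode hγ₂' hγ₂res hsucc_pred hp hp₂))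
  · rintro p ((hp | hp) | hp)
    · exact addSet_subset_addSet_addNode hγ₂' hγ₂res hsucc
        (addSet_subset_addSet_addNode hγ₁.1 hγ₁res hsucc hp)
    · exact addSet_subset_addSet_addNode hγ₂' hγ₂res hsucc hp
    · rw [addNode_comm hrow]
      exact addSet_subset_addSet_addNode hγ₁' hγ₁res hsucc hp

/-- For distinct addable `i`-nodes `γ₁, γ₂` of `λ`:
`I_{i+1}(λ+γ₁+γ₂) = I_{i+1}(λ) ∪ I_{i+1}(λ+γ₁) ∪ I_{i+1}(λ+γ₂)`. -/
theorem addSet_succ_union (n : ℕ) (hn : 3 ≤ n) (lam : ℕ → ℕ)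
    (hlam : IsPartition lam) (i : ZMod n) (γ₁ γ₂ : ℕ × ℕ)
    (hγ₁ : Addable lam γ₁) (hγ₁res : Res n γ₁ = i)
    (hγ₂ : Addable lam γ₂) (hγ₂res : Res n γ₂ = i) (hne : γ₁ ≠ γ₂) :
    AddSet n (addNode (addNode lam γ₁) γ₂) (i + 1) =
      AddSet n lam (i + 1) ∪ AddSet n (addNode lam γ₁) (i + 1) ∪
        AddSet n (addNode lam γ₂) (i + 1) :=
  addSet_succ_union_general n hn lam i γ₁ γ₂ hγ₁ hγ₁res hγ₂ hγ₂res hne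
end
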